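/- Suppose y ∈ ℂᴺ, y ≠ 0, has trivial infinitesimal stabilizer, i.e. the weights {β_j : y_j ≠ 0} span ℝʳ. Fix μ_c ∈ ℝʳ and set f_c = ‖μ_c‖². Then there exist an open neighborhood U of ŷ = y/‖y‖ in the unit sphere of ℂᴺ and constants k > 0 and ε > 0 such that ‖∇f(x)‖² ≥ k·|f(x) − f_c|^{3/2} for all x ∈ ℂᴺ \ {0} with x/‖x‖ ∈ U and ‖μ(x) − μ_c‖ < ε. -/

import Mathlib

/-!
At `x`, the gradient of `f = ‖μ‖²` has coordinates `2 ⟪β j, μ x⟫ • x j`. On a cone around `y`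
on which `‖x j‖ ≥ c ‖x‖` whenever `y j ≠ 0`, the spanning hypothesis, in the form
`∑_{y j ≠ 0} ⟪β j, u⟫² ≥ λ ‖u‖²`, turns this into `‖∇f x‖² ≥ 4 c² λ ‖x‖² ‖μ x‖²`.
Conversely, for `μ x` close to `μ_c`,
`|‖μ x‖² - ‖μ_c‖²| ^ (3/2) ≲ ‖μ x - μ_c‖ ‖μ x‖² ≲ ‖μ x + α‖ ‖μ x‖² ≲ ‖x‖² ‖μ x‖²`,
the last step because `μ x + α` is quadratic in `x`.
-/

open Filter Topology Finset RealInnerProductSpace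

lemma Real.rpow_three_halves_eq_mul_sqrt {t : ℝ} (ht : 0 ≤ t) : t ^ (3 / 2 : ℝ) = t * √t := by
  rw [Real.sqrt_eq_rpow, ← Real.rpow_one_add' ht (by norm_num)]
  norm_num

lemma abs_sq_norm_sub_sq_norm_rpow_le {E : Type*} [SeminormedAddCommGroup E] {v w : E}
    (h : ‖v - w‖ ≤ ‖v‖) : |‖v‖ ^ 2 - ‖w‖ ^ 2| ^ (3 / 2 : ℝ) ≤ 6 * ‖v - w‖ * ‖v‖ ^ 2 := by
  have hw : ‖w‖ ≤ 2 * ‖v‖ := by linarith [norm_le_norm_add_norm_sub' w v, norm_sub_rev v w]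
  have ht : |‖v‖ ^ 2 - ‖w‖ ^ 2| ≤ ‖v - w‖ * (3 * ‖v‖) := by
    rw [show ‖v‖ ^ 2 - ‖w‖ ^ 2 = (‖v‖ - ‖w‖) * (‖v‖ + ‖w‖) by ring, abs_mul,
      abs_of_nonneg (by positivity : 0 ≤ ‖v‖ + ‖w‖)]
    exact mul_le_mul (abs_norm_sub_norm_le v w) (by linarith) (by positivity) (norm_nonneg _)
  have hsqrt : √|‖v‖ ^ 2 - ‖w‖ ^ 2| ≤ 2 * ‖v‖ := by
    rw [Real.sqrt_le_left (by positivity)]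
    nlinarith [norm_nonneg (v - w)]
  calc |‖v‖ ^ 2 - ‖w‖ ^ 2| ^ (3 / 2 : ℝ) = |‖v‖ ^ 2 - ‖w‖ ^ 2| * √|‖v‖ ^ 2 - ‖w‖ ^ 2| :=
        Real.rpow_three_halves_eq_mul_sqrt (abs_nonneg _)
    _ ≤ ‖v - w‖ * (3 * ‖v‖) * (2 * ‖v‖) := by gcongr
    _ = 6 * ‖v - w‖ * ‖v‖ ^ 2 := by ring

lemma eventually_dist_le_dist {X : Type*} [MetricSpace X] (w u : X) :
    ∀ᶠ v in 𝓝 w, dist v w ≤ dist v u := by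
  rcases eq_or_ne w u with rfl | hwu
  · exact .of_forall fun _ => le_rfl
  filter_upwards [Metric.ball_mem_nhds w (half_pos (dist_pos.2 hwu))] with v hv
  rw [Metric.mem_ball] at hv
  linarith [dist_triangle_left w u v]

lemma exists_pos_mul_norm_sq_le_sum_inner_sq {ι E : Type*} [NormedAddCommGroup E]
    [InnerProductSpace ℝ E] [FiniteDimensional ℝ E] (b : ι → E) (s : Finset ι)
    (hspan : Submodule.span ℝ (b '' s) = ⊤) :
    ∃ c > 0, ∀ u : E, c * ‖u‖ ^ 2 ≤ ∑ i ∈ s, ⟪b i, u⟫ ^ 2 := by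
  let T : E →ₗ[ℝ] EuclideanSpace ℝ s :=
    (WithLp.linearEquiv 2 ℝ (s → ℝ)).symm.toLinearMap ∘ₗ
      LinearMap.pi fun i => innerₛₗ ℝ (b i)
  have hT : ∀ u, ‖T u‖ ^ 2 = ∑ i ∈ s, ⟪b i, u⟫ ^ 2 := fun u => by
    simp [T, EuclideanSpace.norm_sq_eq, Finset.sum_attach s (fun i => ⟪b i, u⟫ ^ 2)]
  have hker : LinearMap.ker T = ⊥ := by
    refine (Submodule.eq_bot_iff _).2 fun u hu => ?_
    have hb : b '' s ⊆ (ℝ ∙ u)ᗮ := by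
      rintro _ ⟨i, hi, rfl⟩
      have := congrArg (· ⟨i, hi⟩) hu
      simpa [T, Submodule.mem_orthogonal_singleton_iff_inner_right, real_inner_comm] using this
    have hu : u ∈ (ℝ ∙ u)ᗮ := Submodule.span_le.2 hb (hspan ▸ Submodule.mem_top)
    simpa [Submodule.mem_orthogonal_singleton_iff_inner_right] using hu
  obtain ⟨K, hK, hanti⟩ := T.exists_antilipschitzWith hker
  refine ⟨(K ^ 2 : ℝ)⁻¹, by positivity, fun u => ?_⟩
  rw [← hT, inv_mul_le_iff₀ (by positivity), ← mul_pow]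
  have := hanti.le_mul_dist u 0
  simp only [dist_zero_right, map_zero] at this
  gcongr

lemma exists_pos_eventually_forall_lt_norm_apply {𝕜 ι : Type*} [RCLike 𝕜] [Fintype ι]
    (z : EuclideanSpace 𝕜 ι) (s : Finset ι) (hs : ∀ j ∈ s, z j ≠ 0) :
    ∃ c > 0, ∀ᶠ u in 𝓝 z, ∀ j ∈ s, c < ‖u j‖ := by
  have hc : ∀ᶠ c in 𝓝[>] (0 : ℝ), ∀ j ∈ s, c < ‖z j‖ := (eventually_all_finset s).2
    fun j hj => nhdsWithin_le_nhds (eventually_lt_nhds (norm_pos_iff.2 (hs j hj)))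
  obtain ⟨c, hcz, hc⟩ := (hc.and self_mem_nhdsWithin).exists
  refine ⟨c, hc, (eventually_all_finset s).2 fun j hj => ?_⟩
  exact (PiLp.continuous_apply 2 _ j).norm.tendsto z |>.eventually_const_lt (hcz j hj)

section MomentMap

variable {ι F : Type*} [Fintype ι] [NormedAddCommGroup F] [InnerProductSpace ℝ F]

noncomputable def momentMap (β : ι → F) (α : F) (x : EuclideanSpace ℂ ι) : F :=
  (1 / 2 : ℝ) • ∑ j, ‖x j‖ ^ 2 • β j - α

lemma norm_momentMap_add_le (β : ι → F) (α : F) (x : EuclideanSpace ℂ ι) :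
    ‖momentMap β α x + α‖ ≤ (∑ j, ‖β j‖) / 2 * ‖x‖ ^ 2 := by
  calc ‖momentMap β α x + α‖ = ‖(1 / 2 : ℝ) • ∑ j, ‖x j‖ ^ 2 • β j‖ := by
        rw [momentMap, sub_add_cancel]
    _ ≤ 1 / 2 * ∑ j, ‖x j‖ ^ 2 * ‖β j‖ := by
        rw [norm_smul, Real.norm_of_nonneg (by norm_num)]
        gcongr
        refine (norm_sum_le _ _).trans_eq (sum_congr rfl fun j _ => ?_)
        rw [norm_smul, norm_pow, norm_norm]
    _ ≤ 1 / 2 * ∑ j, ‖x‖ ^ 2 * ‖β j‖ := by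
        gcongr
        exact PiLp.norm_apply_le x _
    _ = (∑ j, ‖β j‖) / 2 * ‖x‖ ^ 2 := by rw [← mul_sum]; ring

lemma hasGradientAt_norm_sq_momentMap (β : ι → F) (α : F) (x : EuclideanSpace ℂ ι) :
    HasGradientAt (fun z => ‖momentMap β α z‖ ^ 2)
      (WithLp.toLp 2 fun j => (2 * ⟪β j, momentMap β α x⟫) • x j) x := by
  let P j : EuclideanSpace ℂ ι →L[ℝ] ℂ := (EuclideanSpace.proj j).restrictScalars ℝ
  have hμ : HasFDerivAt (momentMap β α)
      ((1 / 2 : ℝ) • ∑ j, (2 • (innerSL ℝ (x j)).comp (P j)).smulRight (β j)) x :=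
    ((HasFDerivAt.fun_sum fun j _ => (P j).hasFDerivAt.norm_sq.smul_const (β j)).const_smul
      (1 / 2 : ℝ)).sub_const α
  refine hμ.norm_sq.congr_fderiv ?_
  ext v
  simp [P, real_inner_eq_re_inner, PiLp.inner_apply, real_inner_comm (β _), mul_comm, mul_left_comm,
    mul_assoc]

lemma norm_gradient_norm_sq_momentMap_sq (β : ι → F) (α : F) (x : EuclideanSpace ℂ ι) :
    ‖gradient (fun z => ‖momentMap β α z‖ ^ 2) x‖ ^ 2 =
      4 * ∑ j, ⟪β j, momentMap β α x⟫ ^ 2 * ‖x j‖ ^ 2 := by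
  rw [(hasGradientAt_norm_sq_momentMap β α x).gradient, EuclideanSpace.norm_sq_eq, mul_sum]
  refine sum_congr rfl fun j _ => ?_
  rw [norm_smul, Real.norm_eq_abs, mul_pow, sq_abs]
  ring

lemma abs_norm_sq_momentMap_sub_rpow_le {β : ι → F} {α : F} {x : EuclideanSpace ℂ ι} {w : F}
    (h₀ : ‖momentMap β α x - w‖ ≤ ‖momentMap β α x‖)
    (hα : ‖momentMap β α x - w‖ ≤ ‖momentMap β α x + α‖) :
    |‖momentMap β α x‖ ^ 2 - ‖w‖ ^ 2| ^ (3 / 2 : ℝ) ≤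
      3 * (∑ j, ‖β j‖) * ‖x‖ ^ 2 * ‖momentMap β α x‖ ^ 2 := by
  calc |‖momentMap β α x‖ ^ 2 - ‖w‖ ^ 2| ^ (3 / 2 : ℝ)
      ≤ 6 * ‖momentMap β α x - w‖ * ‖momentMap β α x‖ ^ 2 := abs_sq_norm_sub_sq_norm_rpow_le h₀
    _ ≤ 6 * ((∑ j, ‖β j‖) / 2 * ‖x‖ ^ 2) * ‖momentMap β α x‖ ^ 2 := by
        gcongr
        exact hα.trans (norm_momentMap_add_le β α x)
    _ = 3 * (∑ j, ‖β j‖) * ‖x‖ ^ 2 * ‖momentMap β α x‖ ^ 2 := by ring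

lemma mul_norm_sq_momentMap_le_norm_gradient_sq {β : ι → F} {α : F} {s : Finset ι} {lam c : ℝ}
    (hlam : ∀ u : F, lam * ‖u‖ ^ 2 ≤ ∑ j ∈ s, ⟪β j, u⟫ ^ 2) (hc : 0 ≤ c)
    {x : EuclideanSpace ℂ ι} (hx : ∀ j ∈ s, c * ‖x‖ ≤ ‖x j‖) :
    4 * c ^ 2 * lam * ‖x‖ ^ 2 * ‖momentMap β α x‖ ^ 2 ≤
      ‖gradient (fun z => ‖momentMap β α z‖ ^ 2) x‖ ^ 2 := by
  rw [norm_gradient_norm_sq_momentMap_sq]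
  calc 4 * c ^ 2 * lam * ‖x‖ ^ 2 * ‖momentMap β α x‖ ^ 2
      ≤ 4 * (c * ‖x‖) ^ 2 * ∑ j ∈ s, ⟪β j, momentMap β α x⟫ ^ 2 := by
        rw [mul_pow]
        nlinarith [hlam (momentMap β α x), sq_nonneg (c * ‖x‖)]
    _ = 4 * ∑ j ∈ s, ⟪β j, momentMap β α x⟫ ^ 2 * (c * ‖x‖) ^ 2 := by
        rw [← sum_mul]; ring
    _ ≤ 4 * ∑ j ∈ s, ⟪β j, momentMap β α x⟫ ^ 2 * ‖x j‖ ^ 2 := by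
        gcongr with j hj
        exact hx j hj
    _ ≤ 4 * ∑ j, ⟪β j, momentMap β α x⟫ ^ 2 * ‖x j‖ ^ 2 := by
        gcongr
        exact subset_univ s

lemma exists_lojasiewicz_norm_sq_momentMap [FiniteDimensional ℝ F] (β : ι → F) (α : F)
    (s : Finset ι) (hspan : Submodule.span ℝ (β '' s) = ⊤) {c : ℝ} (hc : 0 < c) (w : F) :
    ∃ k > 0, ∃ ε > 0, ∀ x : EuclideanSpace ℂ ι, (∀ j ∈ s, c * ‖x‖ ≤ ‖x j‖) →
      ‖momentMap β α x - w‖ < ε →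
        k * |‖momentMap β α x‖ ^ 2 - ‖w‖ ^ 2| ^ (3 / 2 : ℝ) ≤
          ‖gradient (fun z => ‖momentMap β α z‖ ^ 2) x‖ ^ 2 := by
  obtain ⟨lam, hlam, hcoer⟩ := exists_pos_mul_norm_sq_le_sum_inner_sq β s hspan
  obtain ⟨ε, hε, hnear⟩ := Metric.eventually_nhds_iff.1
    ((eventually_dist_le_dist w 0).and (eventually_dist_le_dist w (-α)))
  set B := ∑ j, ‖β j‖
  refine ⟨4 * c ^ 2 * lam / (3 * B + 1), by positivity, ε, hε, fun x hx hxε => ?_⟩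
  obtain ⟨h₀, hα⟩ := hnear (y := momentMap β α x) (by rwa [dist_eq_norm])
  rw [dist_eq_norm, dist_zero_right] at h₀
  rw [dist_eq_norm, dist_eq_norm, sub_neg_eq_add] at hα
  refine le_trans ?_ (mul_norm_sq_momentMap_le_norm_gradient_sq hcoer hc.le hx)
  calc 4 * c ^ 2 * lam / (3 * B + 1) * |‖momentMap β α x‖ ^ 2 - ‖w‖ ^ 2| ^ (3 / 2 : ℝ)
      ≤ 4 * c ^ 2 * lam / (3 * B + 1) * (3 * B * ‖x‖ ^ 2 * ‖momentMap β α x‖ ^ 2) := by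
        gcongr
        exact abs_norm_sq_momentMap_sub_rpow_le h₀ hα
    _ ≤ 4 * c ^ 2 * lam * ‖x‖ ^ 2 * ‖momentMap β α x‖ ^ 2 := by
        rw [div_mul_eq_mul_div, div_le_iff₀ (by positivity)]
        nlinarith [mul_nonneg (mul_nonneg (sq_nonneg c) hlam.le)
          (mul_nonneg (sq_nonneg ‖x‖) (sq_nonneg ‖momentMap β α x‖))]

end MomentMap

lemma eq_momentMap {ι ρ : Type*} [Fintype ι] [Fintype ρ] {β : ι → EuclideanSpace ℝ ρ}
    {α : EuclideanSpace ℝ ρ} {μ : EuclideanSpace ℂ ι → EuclideanSpace ℝ ρ}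
    (hμ : ∀ x a, μ x a = (1 / 2 : ℝ) * (∑ j, ‖x j‖ ^ 2 * β j a) - α a) :
    μ = momentMap β α := by
  ext x a
  simp [hμ, momentMap, WithLp.ofLp_sum]

theorem stmt_13_general
    (N r : ℕ)
    (β : Fin N → EuclideanSpace ℝ (Fin r)) (α : EuclideanSpace ℝ (Fin r))
    (μ : EuclideanSpace ℂ (Fin N) → EuclideanSpace ℝ (Fin r))
    (hμ : ∀ x : EuclideanSpace ℂ (Fin N), ∀ a : Fin r,
      μ x a = (1 / 2 : ℝ) * (∑ j, ‖x j‖ ^ 2 * β j a) - α a)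
    (f : EuclideanSpace ℂ (Fin N) → ℝ)
    (hf : ∀ x, f x = ‖μ x‖ ^ 2)
    (y : EuclideanSpace ℂ (Fin N)) (hy : y ≠ 0)
    (hstab : Submodule.span ℝ (β '' {j : Fin N | y j ≠ 0}) = ⊤)
    (mc : EuclideanSpace ℝ (Fin r)) :
    ∃ U : Set (EuclideanSpace ℂ (Fin N)), IsOpen U ∧ ‖y‖⁻¹ • y ∈ U ∧
      ∃ k > (0 : ℝ), ∃ ε > (0 : ℝ),
        ∀ x : EuclideanSpace ℂ (Fin N), x ≠ 0 → ‖x‖⁻¹ • x ∈ U →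
          ‖μ x - mc‖ < ε →
            k * |f x - ‖mc‖ ^ 2| ^ (3 / 2 : ℝ) ≤ ‖gradient f x‖ ^ 2 := by
  obtain rfl := eq_momentMap hμ
  obtain rfl : f = fun z => ‖momentMap β α z‖ ^ 2 := funext hf
  set S := univ.filter fun j => y j ≠ 0
  have hspan : Submodule.span ℝ (β '' S) = ⊤ := by simpa [S] using hstab
  have hyS : ∀ j ∈ S, (‖y‖⁻¹ • y) j ≠ 0 := fun j hj => by
    simpa [hy] using (mem_filter.1 hj).2
  obtain ⟨c, hc, hU⟩ := exists_pos_eventually_forall_lt_norm_apply _ S hyS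
  obtain ⟨U, hUc, hUo, hyU⟩ := eventually_nhds_iff.1 hU
  obtain ⟨k, hk, ε, hε, hloj⟩ := exists_lojasiewicz_norm_sq_momentMap β α S hspan hc mc
  refine ⟨U, hUo, hyU, k, hk, ε, hε, fun x hx hxU hxε => hloj x (fun j hj => ?_) hxε⟩
  have := hUc _ hxU j hj
  rw [PiLp.smul_apply, norm_smul, norm_inv, norm_norm,
    lt_inv_mul_iff₀' (norm_pos_iff.2 hx)] at this
  exact this.le

/-- **Local Łojasiewicz estimate near a point with trivial infinitesimal stabilizer
(Proposition `FreeCase`).**  Let `μ x = (1/2) ∑ⱼ |xⱼ|² βⱼ - α` be the moment map of a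
linear torus action on `ℂᴺ` and `f = ‖μ‖²`.  Suppose `y ≠ 0` has trivial
infinitesimal stabilizer, i.e. the weights `{βⱼ : yⱼ ≠ 0}` span `ℝʳ`.  Then for any
`μ_c ∈ ℝʳ` with `f_c = ‖μ_c‖²` there are an open neighborhood `U` of `ŷ = y/‖y‖`
(in the unit sphere) and constants `k > 0`, `ε > 0` such that
`‖∇f x‖² ≥ k |f x - f_c| ^ (3/2)` for all `x ≠ 0` with `x/‖x‖ ∈ U` and
`‖μ x - μ_c‖ < ε`. -/
theorem stmt_13
    (N r : ℕ) (hN : 1 ≤ N) (hr : 1 ≤ r)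
    (β : Fin N → EuclideanSpace ℝ (Fin r)) (α : EuclideanSpace ℝ (Fin r))
    (μ : EuclideanSpace ℂ (Fin N) → EuclideanSpace ℝ (Fin r))
    (hμ : ∀ x : EuclideanSpace ℂ (Fin N), ∀ a : Fin r,
      μ x a = (1 / 2 : ℝ) * (∑ j, ‖x j‖ ^ 2 * β j a) - α a)
    (f : EuclideanSpace ℂ (Fin N) → ℝ)
    (hf : ∀ x, f x = ‖μ x‖ ^ 2)
    (y : EuclideanSpace ℂ (Fin N)) (hy : y ≠ 0)
    (hstab : Submodule.span ℝ (β '' {j : Fin N | y j ≠ 0}) = ⊤)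
    (mc : EuclideanSpace ℝ (Fin r)) :
    ∃ U : Set (EuclideanSpace ℂ (Fin N)), IsOpen U ∧ ‖y‖⁻¹ • y ∈ U ∧
      ∃ k > (0 : ℝ), ∃ ε > (0 : ℝ),
        ∀ x : EuclideanSpace ℂ (Fin N), x ≠ 0 → ‖x‖⁻¹ • x ∈ U →
          ‖μ x - mc‖ < ε →
            k * |f x - ‖mc‖ ^ 2| ^ (3 / 2 : ℝ) ≤ ‖gradient f x‖ ^ 2 :=
  stmt_13_general N r β α μ hμ f hf y hy hstab mc
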